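/- arXiv:1611.03705 — 2 statements merged into one kernel-verified Lean document; each statement's English description precedes it below -/
import Mathlib

section
/- For natural numbers t and k with k ≥ 1, the number of natural numbers n < 2^t such that the Catalan number Cₙ is congruent to 0 modulo 2^k equals the sum of binomial coefficients Σ_{i=k+1}^{t} binomial(t, i). -/
/-!
Legendre's formula `ν₂(m!) = m - s₂(m)`, with `s₂` the binary digit sum, applied to
`Cₙ · n! · (n+1)! = (2n)!` and combined with `s₂(2n) = s₂(n)` gives `ν₂(Cₙ) = s₂(n+1) - 1`.
So `2^k ∣ Cₙ` iff `n + 1` has more than `k` binary ones. A number `m < 2^t` is the same as the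
set of positions of its binary ones, a subset of `{0, …, t-1}`, so exactly `C(t, i)` of them have
`i` ones; passing from `n + 1` back to `n` only exchanges `2^t` for `0`, neither of which has more
than `k ≥ 1` ones.
-/

open Finset

namespace Nat

theorem digits_two_sum_eq_length_bitIndices (n : ℕ) :
    (digits 2 n).sum = n.bitIndices.length := by
  induction n using binaryRec with
  | zero => simp
  | bit b n ih =>
    rcases eq_or_ne (bit b n) 0 with h | h
    · simp [h]
    · rw [digits_def' (by norm_num) (pos_of_ne_zero h)]
      cases b <;> simp [ih, Nat.add_comm 1, Nat.mul_add_div]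

theorem digits_two_sum_eq_card_equivBitIndices (n : ℕ) :
    (digits 2 n).sum = #(equivBitIndices n) := by
  rw [digits_two_sum_eq_length_bitIndices, equivBitIndices_apply,
    List.toFinset_card_of_nodup bitIndices_nodup]

theorem digits_two_sum_two_mul (n : ℕ) : (digits 2 (2 * n)).sum = (digits 2 n).sum := by
  simp [digits_two_sum_eq_length_bitIndices]

theorem digits_two_sum_two_pow (t : ℕ) : (digits 2 (2 ^ t)).sum = 1 := by
  rw [digits_two_sum_eq_length_bitIndices, bitIndices_two_pow, List.length_singleton]

theorem lt_two_pow_iff_equivBitIndices_subset_range {n t : ℕ} :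
    n < 2 ^ t ↔ equivBitIndices n ⊆ range t := by
  constructor
  · intro hn i hi
    have : 2 ^ i ≤ n := two_pow_le_of_mem_bitIndices (by simpa using hi)
    exact mem_range.2 ((Nat.pow_lt_pow_iff_right (by norm_num)).1 (this.trans_lt hn))
  · intro hs
    rw [← equivBitIndices.symm_apply_apply n, equivBitIndices_symm_apply]
    exact geomSum_lt le_rfl fun i hi => mem_range.1 (hs hi)

theorem card_filter_range_two_pow_digits_two_sum (t : ℕ) (p : ℕ → Prop) [DecidablePred p] :
    #{n ∈ range (2 ^ t) | p (digits 2 n).sum} = ∑ i ∈ range (t + 1) with p i, t.choose i := by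
  have hbij : #{n ∈ range (2 ^ t) | p (digits 2 n).sum} = #{s ∈ (range t).powerset | p #s} := by
    apply card_nbij' equivBitIndices equivBitIndices.symm
    · intro n hn
      simp only [coe_filter, mem_range, Set.mem_ofPred_eq, mem_powerset] at hn ⊢
      rwa [← lt_two_pow_iff_equivBitIndices_subset_range, ← digits_two_sum_eq_card_equivBitIndices]
    · intro s hs
      simp only [coe_filter, mem_range, Set.mem_ofPred_eq, mem_powerset] at hs ⊢
      rwa [lt_two_pow_iff_equivBitIndices_subset_range, digits_two_sum_eq_card_equivBitIndices,
        Equiv.apply_symm_apply]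
    · exact fun n _ => equivBitIndices.symm_apply_apply n
    · exact fun s _ => equivBitIndices.apply_symm_apply s
  rw [hbij, card_filter, sum_powerset_apply_card (fun m => if p m then 1 else 0), card_range,
    sum_filter]
  simp

theorem card_filter_range_two_pow_digits_two_sum_succ {t j : ℕ} (hj : 2 ≤ j) :
    #{n ∈ range (2 ^ t) | j ≤ (digits 2 (n + 1)).sum}
      = #{m ∈ range (2 ^ t) | j ≤ (digits 2 m).sum} := by
  have htop := digits_two_sum_two_pow t
  have hpos {m : ℕ} (hm : j ≤ (digits 2 m).sum) : 0 < m :=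
    pos_of_ne_zero (by rintro rfl; simp at hm; omega)
  apply card_nbij' (· + 1) (· - 1)
  · intro n hn
    simp only [coe_filter, mem_range, Set.mem_ofPred_eq] at hn ⊢
    refine ⟨lt_of_le_of_ne hn.1 fun h => ?_, hn.2⟩
    rw [h] at hn
    omega
  · intro m hm
    simp only [coe_filter, mem_range, Set.mem_ofPred_eq] at hm ⊢
    rw [Nat.sub_add_cancel (hpos hm.2)]
    exact ⟨by omega, hm.2⟩
  · exact fun n _ => Nat.add_sub_cancel n 1
  · exact fun m hm => Nat.sub_add_cancel (hpos (mem_filter.1 hm).2)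

theorem padicValNat_two_factorial_add_digits_sum (n : ℕ) :
    padicValNat 2 n ! + (digits 2 n).sum = n := by
  have := sub_one_mul_padicValNat_factorial (p := 2) (hp := ⟨prime_two⟩) n
  have := digit_sum_le 2 n
  omega

end Nat

open Nat

theorem catalan_ne_zero (n : ℕ) : catalan n ≠ 0 :=
  right_ne_zero_of_mul ((succ_mul_catalan_eq_centralBinom n).trans_ne n.centralBinom_ne_zero)

theorem catalan_mul_factorial_mul_factorial_succ (n : ℕ) :
    catalan n * (n ! * (n + 1)!) = (2 * n)! := by
  rw [factorial_succ, ← choose_mul_factorial_mul_factorial (by omega : n ≤ 2 * n),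
    show 2 * n - n = n by omega, ← centralBinom_eq_two_mul_choose,
    ← succ_mul_catalan_eq_centralBinom]
  ring

theorem padicValNat_two_catalan_add_one (n : ℕ) :
    padicValNat 2 (catalan n) + 1 = (digits 2 (n + 1)).sum := by
  have : Fact (Nat.Prime 2) := ⟨prime_two⟩
  have hval := congrArg (padicValNat 2) (catalan_mul_factorial_mul_factorial_succ n)
  rw [padicValNat.mul (catalan_ne_zero n) (by positivity),
    padicValNat.mul (factorial_ne_zero n) (factorial_ne_zero (n + 1))] at hval
  have h2n := padicValNat_two_factorial_add_digits_sum (2 * n)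
  have hn := padicValNat_two_factorial_add_digits_sum n
  have hn1 := padicValNat_two_factorial_add_digits_sum (n + 1)
  rw [digits_two_sum_two_mul] at h2n
  omega

theorem two_pow_dvd_catalan_iff {k n : ℕ} :
    2 ^ k ∣ catalan n ↔ k + 1 ≤ (digits 2 (n + 1)).sum := by
  have : Fact (Nat.Prime 2) := ⟨prime_two⟩
  rw [padicValNat_dvd_iff_le (catalan_ne_zero n), ← padicValNat_two_catalan_add_one]
  omega

/-- `#{n < 2^t : Cₙ ≡ 0 (mod 2^k)} = Σ_{i=k+1}^{t} C(t, i)`. -/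
theorem card_catalan_modEq_zero (t k : ℕ) (hk : 1 ≤ k) :
    {n : ℕ | n < 2 ^ t ∧ catalan n ≡ 0 [MOD 2 ^ k]}.ncard
      = ∑ i ∈ Finset.Icc (k + 1) t, t.choose i := by
  have hset : {n : ℕ | n < 2 ^ t ∧ catalan n ≡ 0 [MOD 2 ^ k]}
      = ↑{n ∈ range (2 ^ t) | k + 1 ≤ (digits 2 (n + 1)).sum} := by
    ext n
    simp [Nat.modEq_zero_iff_dvd, two_pow_dvd_catalan_iff]
  rw [hset, Set.ncard_coe_finset, card_filter_range_two_pow_digits_two_sum_succ (by omega),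
    card_filter_range_two_pow_digits_two_sum]
  congr 1
  ext i
  simp only [mem_filter, mem_range, mem_Icc]
  omega
end

section
/- For natural numbers t and k with k ≥ 1, the number of natural numbers n < 2^t satisfying d(α(n)) = k equals the sum Σ_{i=k}^{t−1} binomial(i, k). -/
/-- Binary digit sum: the sum of the digits of `n` in base 2. -/
def binaryDigitSum (n : ℕ) : ℕ := (Nat.digits 2 n).sum

/-- `α(n) = (CF₂(n+1) − 1)/2` where `CF₂(m) = m / 2^{ν₂(m)}` is the odd cofactor. -/
def alphaFn (n : ℕ) : ℕ := ((n + 1) / 2 ^ padicValNat 2 (n + 1) - 1) / 2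

/-! The binary digit sum of `n` is the number of its set bits, so it is unchanged by
multiplication by a power of two and grows by one when a set low bit is appended. Writing
`n + 1 = 2 ^ ν₂(n+1) * (2 α(n) + 1)` therefore gives `d(α(n)) + 1 = d(n + 1)`, and the count
becomes the number of `m < 2 ^ t` with `k + 1` set bits (the shift `n ↦ n + 1` loses `0` and
gains `2 ^ t`, neither of which has `k + 1 ≥ 2` set bits). The sets of bit positions of the
`m < 2 ^ t` are exactly the subsets of `range t`, so this number is `C(t, k+1)`, which is the
hockey-stick sum. -/

open Finset

theorem binaryDigitSum_eq_mod_add_div (n : ℕ) :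
    binaryDigitSum n = n % 2 + binaryDigitSum (n / 2) := by
  rcases Nat.eq_zero_or_pos n with rfl | hn
  · rfl
  · simp [binaryDigitSum, Nat.digits_def' one_lt_two hn]

theorem binaryDigitSum_eq_length_bitIndices (n : ℕ) :
    binaryDigitSum n = n.bitIndices.length := by
  induction n using Nat.evenOddRec with
  | h0 => rfl
  | h_even n ih => rw [binaryDigitSum_eq_mod_add_div]; simp [ih]
  | h_odd n ih =>
    have hbit : (2 * n + 1) % 2 = 1 ∧ (2 * n + 1) / 2 = n := by omega
    rw [binaryDigitSum_eq_mod_add_div, hbit.1, hbit.2, Nat.bitIndices_two_mul_add_one,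
      List.length_cons, List.length_map, ih, add_comm]

theorem binaryDigitSum_eq_card_toFinset_bitIndices (n : ℕ) :
    binaryDigitSum n = #n.bitIndices.toFinset := by
  rw [binaryDigitSum_eq_length_bitIndices, List.toFinset_card_of_nodup Nat.bitIndices_nodup]

theorem binaryDigitSum_two_pow_mul (v m : ℕ) :
    binaryDigitSum (2 ^ v * m) = binaryDigitSum m := by
  simp [binaryDigitSum_eq_length_bitIndices]

theorem binaryDigitSum_two_mul_add_one (m : ℕ) :
    binaryDigitSum (2 * m + 1) = binaryDigitSum m + 1 := by
  simp [binaryDigitSum_eq_length_bitIndices]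

theorem binaryDigitSum_two_pow (t : ℕ) : binaryDigitSum (2 ^ t) = 1 := by
  simp [binaryDigitSum_eq_length_bitIndices]

theorem two_pow_mul_two_mul_alphaFn_add_one (n : ℕ) :
    2 ^ padicValNat 2 (n + 1) * (2 * alphaFn n + 1) = n + 1 := by
  have hn : n + 1 ≠ 0 := n.succ_ne_zero
  have hfac : (n + 1).factorization 2 = padicValNat 2 (n + 1) :=
    Nat.factorization_def _ Nat.prime_two
  have hodd : ¬ 2 ∣ (n + 1) / 2 ^ padicValNat 2 (n + 1) :=
    hfac ▸ Nat.not_dvd_ordCompl Nat.prime_two hn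
  have hcofactor : 2 * alphaFn n + 1 = (n + 1) / 2 ^ padicValNat 2 (n + 1) := by
    unfold alphaFn
    generalize (n + 1) / 2 ^ padicValNat 2 (n + 1) = c at hodd ⊢
    omega
  rw [hcofactor, ← hfac]
  exact Nat.ordProj_mul_ordCompl_eq_self (n + 1) 2

theorem binaryDigitSum_alphaFn_add_one (n : ℕ) :
    binaryDigitSum (alphaFn n) + 1 = binaryDigitSum (n + 1) := by
  rw [← two_pow_mul_two_mul_alphaFn_add_one n, binaryDigitSum_two_pow_mul,
    binaryDigitSum_two_mul_add_one]

theorem card_filter_binaryDigitSum_eq_choose (t s : ℕ) :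
    #{m ∈ range (2 ^ t) | binaryDigitSum m = s} = t.choose s := by
  rw [show t.choose s = #(powersetCard s (range t)) by simp]
  refine card_nbij' (fun m ↦ m.bitIndices.toFinset) (fun S ↦ ∑ i ∈ S, 2 ^ i) ?_ ?_ ?_ ?_
  · intro m hm
    rw [mem_coe, mem_filter, mem_range] at hm
    rw [mem_coe, mem_powersetCard, ← binaryDigitSum_eq_card_toFinset_bitIndices]
    refine ⟨fun i hi ↦ ?_, hm.2⟩
    rw [List.mem_toFinset] at hi
    exact mem_range.2 <| (Nat.pow_lt_pow_iff_right one_lt_two).1 <|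
      (Nat.two_pow_le_of_mem_bitIndices hi).trans_lt hm.1
  · intro S hS
    rw [mem_coe, mem_powersetCard] at hS
    rw [mem_coe, mem_filter, mem_range, binaryDigitSum_eq_card_toFinset_bitIndices,
      Finset.toFinset_bitIndices_sum_two_pow]
    exact ⟨Nat.geomSum_lt le_rfl fun i hi ↦ mem_range.1 (hS.1 hi), hS.2⟩
  · intro m _
    exact Finset.sum_toFinset_bitIndices_two_pow m
  · intro S _
    exact Finset.toFinset_bitIndices_sum_two_pow S

theorem card_filter_range_add_one {p : ℕ → Prop} [DecidablePred p] (N : ℕ)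
    (h0 : ¬ p 0) (hN : ¬ p N) : #{n ∈ range N | p (n + 1)} = #{n ∈ range N | p n} := by
  calc #{n ∈ range N | p (n + 1)} = #{n ∈ range (N + 1) | p n} := by
        rw [range_add_one', filter_insert, if_neg h0, filter_map, card_map]
        rfl
    _ = #{n ∈ range N | p n} := by rw [range_add_one, filter_insert, if_neg hN]

/-- `#{n < 2^t : d(α(n)) = k} = Σ_{i=k}^{t−1} C(i, k)`. -/
theorem card_dAlpha_eq_sum (t k : ℕ) (hk : 1 ≤ k) :
    {n : ℕ | n < 2 ^ t ∧ binaryDigitSum (alphaFn n) = k}.ncard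
      = ∑ i ∈ Finset.Icc k (t - 1), i.choose k := by
  have hset : {n : ℕ | n < 2 ^ t ∧ binaryDigitSum (alphaFn n) = k}
      = ↑{n ∈ range (2 ^ t) | binaryDigitSum (alphaFn n) = k} := by
    ext n; simp
  calc {n : ℕ | n < 2 ^ t ∧ binaryDigitSum (alphaFn n) = k}.ncard
      = #{n ∈ range (2 ^ t) | binaryDigitSum (n + 1) = k + 1} := by
        simp only [hset, Set.ncard_coe_finset, ← binaryDigitSum_alphaFn_add_one,
          Nat.add_right_cancel_iff]
    _ = #{m ∈ range (2 ^ t) | binaryDigitSum m = k + 1} :=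
        card_filter_range_add_one (p := fun m ↦ binaryDigitSum m = k + 1) _
          (by simp [binaryDigitSum])
          (by rw [binaryDigitSum_two_pow]; omega)
    _ = t.choose (k + 1) := card_filter_binaryDigitSum_eq_choose t (k + 1)
    _ = ∑ i ∈ Icc k (t - 1), i.choose k := by
        rw [Nat.sum_Icc_choose]
        rcases t with _ | t
        · exact (Nat.choose_eq_zero_of_lt (by omega)).symm
        · rfl
end
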